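/- Let ρ: G → U(V) and ρ': G → U(V') be non-isomorphic irreducible unitary representations of a compact group G, with at least one finite-dimensional. Then any two matrix coefficients ρ^{u,v}(g) = conj(⟨u, ρ(g)v⟩) and ρ'^{u',v'}(g) = conj(⟨u', ρ'(g)v'⟩) are orthogonal in L²(G): ∫_G conj(ρ^{u,v}(g)) · ρ'^{u',v'}(g) dg = 0. -/

import Mathlib

/-!
Averaging the conjugates `ρ g ∘ (x ↦ ⟪v', x⟫ v) ∘ ρ' g⁻¹` of a rank-one operator over `G` gives an
intertwiner `T : V' → V` with `⟪u, T u'⟫ = ∫ ⟪u, ρ g v⟫ ⟪ρ' g v', u'⟫ dg`, which is the integral in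
question. Schur's lemma forces `T = 0`: the kernel and the closure of the range of `T` are closed
invariant subspaces, so a nonzero `T` is injective with dense range, hence a bijection between
finite-dimensional spaces. Then `T† T` is a self-adjoint intertwiner of the irreducible `ρ'`, so
it is a positive scalar `c`, and `c^{-1/2} T` would be a unitary equivalence.
-/

open MeasureTheory

section

open InnerProductSpace ContinuousLinearMap Function

section Isometry

variable {K E F : Type*} [RCLike K]
  [NormedAddCommGroup E] [InnerProductSpace K E] [CompleteSpace E]
  [NormedAddCommGroup F] [InnerProductSpace K F] [CompleteSpace F]

theorem norm_apply_sq_of_adjoint_comp_self_eq_smul {T : E →L[K] F} {c : ℝ}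
    (hc : ∀ x, adjoint T (T x) = (c : K) • x) (x : E) : ‖T x‖ ^ 2 = c * ‖x‖ ^ 2 := by
  have h := adjoint_inner_right T x (T x)
  rw [hc, inner_smul_right, inner_self_eq_norm_sq_to_K, inner_self_eq_norm_sq_to_K] at h
  exact_mod_cast h.symm

theorem exists_linearIsometryEquiv_eq_smul_of_adjoint_comp_self_eq_smul {T : E →L[K] F}
    (hT0 : T ≠ 0) (hsurj : Surjective T) {c : ℝ} (hc : ∀ x, adjoint T (T x) = (c : K) • x) :
    ∃ (s : K) (e : E ≃ₗᵢ[K] F), ∀ x, e x = s • T x := by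
  have hnorm_sq := norm_apply_sq_of_adjoint_comp_self_eq_smul hc
  have hc0 : 0 < c := by
    obtain ⟨x₀, hx₀⟩ := DFunLike.ne_iff.mp hT0
    have : 0 < ‖T x₀‖ ^ 2 := by positivity
    nlinarith [hnorm_sq x₀, sq_nonneg ‖x₀‖]
  have hnorm : ∀ x, ‖T x‖ = √c * ‖x‖ := fun x => by
    rw [← Real.sqrt_sq (norm_nonneg (T x)), hnorm_sq, Real.sqrt_mul hc0.le,
      Real.sqrt_sq (norm_nonneg x)]
  set s : K := (((√c)⁻¹ : ℝ) : K)
  have hs : s ≠ 0 := RCLike.ofReal_ne_zero.mpr (by positivity)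
  let L : E →ₗᵢ[K] F :=
    { toLinearMap := (s • T : E →L[K] F)
      norm_map' := fun x => by
        rw [coe_coe, smul_apply, norm_smul, RCLike.norm_ofReal, hnorm,
          abs_of_pos (by positivity)]
        field_simp }
  have hLsurj : Surjective L := fun y =>
    let ⟨x, hx⟩ := hsurj (s⁻¹ • y)
    ⟨x, by simp [L, hx, smul_smul, hs]⟩
  exact ⟨s, .ofSurjective L hLsurj, fun _ => rfl⟩

end Isometry

variable {K G V V' : Type*} [RCLike K] [Group G]
  [NormedAddCommGroup V] [InnerProductSpace K V] [NormedAddCommGroup V'] [InnerProductSpace K V']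

theorem inner_map_inv_apply_left {ρ : G →* (V →L[K] V)}
    (hρu : ∀ (g : G) (v w : V), inner K (ρ g v) (ρ g w) = (inner K v w : K)) (g : G) (a b : V) :
    inner K (ρ g⁻¹ a) b = (inner K a (ρ g b) : K) := by
  have hinv : ρ g (ρ g⁻¹ a) = a := by
    rw [← mul_apply_eq_comp, ← map_mul, mul_inv_cancel, map_one, one_apply_eq_self]
  rw [← hρu g, hinv]

theorem exists_eq_smul_of_isSymmetric_of_intertwines {ρ' : G →* (V' →L[K] V')}
    [FiniteDimensional K V'] [Nontrivial V']
    (hV'irr : ∀ W : Submodule K V', IsClosed (W : Set V') →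
      (∀ (g : G) (v : V'), v ∈ W → ρ' g v ∈ W) → W = ⊥ ∨ W = ⊤)
    {A : V' →ₗ[K] V'} (hA : A.IsSymmetric) (hAρ' : ∀ (g : G) (x : V'), A (ρ' g x) = ρ' g (A x)) :
    ∃ c : ℝ, ∀ x, A x = (c : K) • x := by
  obtain ⟨c, hc⟩ : ∃ c : ℝ, Module.End.HasEigenvalue A c :=
    ⟨_, hA.hasEigenvalue_iSup_of_finiteDimensional⟩
  have hE : ∀ (g : G) (x : V'), x ∈ Module.End.eigenspace A (c : K) →
      ρ' g x ∈ Module.End.eigenspace A (c : K) := by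
    intro g x hx
    rw [Module.End.mem_eigenspace_iff] at hx ⊢
    rw [hAρ', hx, map_smul]
  refine ⟨c, fun x => ?_⟩
  rcases hV'irr _ (Submodule.closed_of_finiteDimensional _) hE with h | h
  · exact absurd h hc
  · exact Module.End.mem_eigenspace_iff.mp (h ▸ Submodule.mem_top)

section Schur

variable {ρ : G →* (V →L[K] V)} {ρ' : G →* (V' →L[K] V')}

theorem eq_zero_or_injective_of_intertwines
    (hV'irr : ∀ W : Submodule K V', IsClosed (W : Set V') →
      (∀ (g : G) (v : V'), v ∈ W → ρ' g v ∈ W) → W = ⊥ ∨ W = ⊤)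
    {T : V' →L[K] V} (hT : ∀ (g : G) (x : V'), T (ρ' g x) = ρ g (T x)) :
    T = 0 ∨ Injective T := by
  have hker : ∀ (g : G) (x : V'), x ∈ T.ker → ρ' g x ∈ T.ker := by
    intro g x hx
    simp only [LinearMap.mem_ker, coe_coe] at hx ⊢
    rw [hT, hx, map_zero]
  refine (hV'irr _ T.isClosed_ker hker).symm.imp (fun h => ?_) (fun h => ?_)
  · exact coe_injective (LinearMap.ker_eq_top.mp h)
  · exact LinearMap.ker_eq_bot.mp h

theorem eq_zero_or_denseRange_of_intertwines
    (hVirr : ∀ W : Submodule K V, IsClosed (W : Set V) →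
      (∀ (g : G) (v : V), v ∈ W → ρ g v ∈ W) → W = ⊥ ∨ W = ⊤)
    {T : V' →L[K] V} (hT : ∀ (g : G) (x : V'), T (ρ' g x) = ρ g (T x)) :
    T = 0 ∨ DenseRange T := by
  set W := T.range.topologicalClosure
  have hWc : IsClosed (W : Set V) := Submodule.isClosed_topologicalClosure _
  have hW : ∀ (g : G) (y : V), y ∈ W → ρ g y ∈ W := by
    intro g
    suffices W ≤ W.comap (ρ g : V →ₗ[K] V) from fun y hy => this hy
    refine Submodule.topologicalClosure_minimal _ ?_ (hWc.preimage (ρ g).continuous)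
    rintro _ ⟨x, rfl⟩
    exact Submodule.le_topologicalClosure _ ⟨ρ' g x, hT g x⟩
  refine (hVirr W hWc hW).imp (fun h => ?_) (fun h => ?_)
  · ext x
    have hx : T x ∈ W := Submodule.le_topologicalClosure _ ⟨x, rfl⟩
    simpa [h] using hx
  · exact Submodule.dense_iff_topologicalClosure_eq_top.mpr h

variable [CompleteSpace V] [CompleteSpace V']

theorem adjoint_intertwines
    (hρu : ∀ (g : G) (v w : V), inner K (ρ g v) (ρ g w) = (inner K v w : K))
    (hρ'u : ∀ (g : G) (v w : V'), inner K (ρ' g v) (ρ' g w) = (inner K v w : K))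
    {T : V' →L[K] V} (hT : ∀ (g : G) (x : V'), T (ρ' g x) = ρ g (T x)) (g : G) (y : V) :
    adjoint T (ρ g y) = ρ' g (adjoint T y) := by
  refine ext_inner_left K fun x => ?_
  rw [adjoint_inner_right, ← inner_map_inv_apply_left hρ'u, adjoint_inner_right, hT,
    ← inner_map_inv_apply_left hρu]

theorem eq_zero_of_intertwines_of_not_isomorphic [Nontrivial V']
    (hρu : ∀ (g : G) (v w : V), inner K (ρ g v) (ρ g w) = (inner K v w : K))
    (hρ'u : ∀ (g : G) (v w : V'), inner K (ρ' g v) (ρ' g w) = (inner K v w : K))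
    (hVirr : ∀ W : Submodule K V, IsClosed (W : Set V) →
      (∀ (g : G) (v : V), v ∈ W → ρ g v ∈ W) → W = ⊥ ∨ W = ⊤)
    (hV'irr : ∀ W : Submodule K V', IsClosed (W : Set V') →
      (∀ (g : G) (v : V'), v ∈ W → ρ' g v ∈ W) → W = ⊥ ∨ W = ⊤)
    (hfd : FiniteDimensional K V ∨ FiniteDimensional K V')
    (hniso : ¬ ∃ e : V ≃ₗᵢ[K] V', ∀ (g : G) (v : V), e (ρ g v) = ρ' g (e v))
    {T : V' →L[K] V} (hT : ∀ (g : G) (x : V'), T (ρ' g x) = ρ g (T x)) :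
    T = 0 := by
  by_contra hT0
  have hinj := (eq_zero_or_injective_of_intertwines hV'irr hT).resolve_left hT0
  have hdense := (eq_zero_or_denseRange_of_intertwines hVirr hT).resolve_left hT0
  have : FiniteDimensional K V' := hfd.elim (fun _ => .of_injective (T : V' →ₗ[K] V) hinj) id
  have hsurj : Surjective T := by
    have hclosed : IsClosed (Set.range T) := T.range.closed_of_finiteDimensional
    rw [← Set.range_eq_univ, ← hclosed.closure_eq]
    exact hdense.closure_range
  obtain ⟨c, hc⟩ := exists_eq_smul_of_isSymmetric_of_intertwines hV'irr
    (isPositive_adjoint_comp_self T).isSymmetric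
    (fun g x => by simp [hT, adjoint_intertwines hρu hρ'u hT])
  obtain ⟨s, e, he⟩ := exists_linearIsometryEquiv_eq_smul_of_adjoint_comp_self_eq_smul hT0 hsurj hc
  refine hniso ⟨e.symm, fun g y => e.injective ?_⟩
  rw [e.apply_symm_apply, he, hT, ← map_smul, ← he, e.apply_symm_apply]

end Schur

section Averaging

variable [TopologicalSpace G] [MeasurableSpace G]

/-- Since `rankOne K (ρ g v) (ρ' g v') = ρ g ∘L rankOne K v v' ∘L ρ' g⁻¹` for unitary `ρ'`, this is
the Haar average of the conjugates of `rankOne K v v'`. -/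
noncomputable def rankOneAverage [CompleteSpace V] [NormedSpace ℝ V] [SMulCommClass K ℝ V]
    (μ : Measure G) (ρ : G →* (V →L[K] V)) (ρ' : G →* (V' →L[K] V')) (v : V) (v' : V') :
    V' →L[K] V :=
  ∫ g, rankOne K (ρ g v) (ρ' g v') ∂μ

variable [OpensMeasurableSpace G] [CompactSpace G] {μ : Measure G} [IsFiniteMeasure μ]
  {ρ : G →* (V →L[K] V)} {ρ' : G →* (V' →L[K] V')}

theorem integrable_rankOne (hρc : ∀ v : V, Continuous fun g : G => ρ g v)
    (hρ'c : ∀ v : V', Continuous fun g : G => ρ' g v) (v : V) (v' : V') :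
    Integrable (fun g => rankOne K (ρ g v) (ρ' g v')) μ :=
  ((smulRightL K V' V).continuous₂.comp₂ ((innerSL K).continuous.comp (hρ'c v')) (hρc v))
    |>.integrable_of_hasCompactSupport (.of_compactSpace _)

theorem integrable_inner_smul (hρc : ∀ v : V, Continuous fun g : G => ρ g v)
    (hρ'c : ∀ v : V', Continuous fun g : G => ρ' g v) (v : V) (v' : V') (x : V') :
    Integrable (fun g => inner K (ρ' g v') x • ρ g v) μ :=
  (integrable_rankOne hρc hρ'c v v').apply_continuousLinearMap x

variable [CompleteSpace V] [NormedSpace ℝ V] [SMulCommClass K ℝ V]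

theorem rankOneAverage_apply (hρc : ∀ v : V, Continuous fun g : G => ρ g v)
    (hρ'c : ∀ v : V', Continuous fun g : G => ρ' g v) (v : V) (v' : V') (x : V') :
    rankOneAverage μ ρ ρ' v v' x = ∫ g, inner K (ρ' g v') x • ρ g v ∂μ :=
  integral_apply (integrable_rankOne hρc hρ'c v v') x

theorem inner_rankOneAverage (hρc : ∀ v : V, Continuous fun g : G => ρ g v)
    (hρ'c : ∀ v : V', Continuous fun g : G => ρ' g v) (u v : V) (u' v' : V') :
    inner K u (rankOneAverage μ ρ ρ' v v' u') =
      ∫ g, inner K u (ρ g v) * inner K (ρ' g v') u' ∂μ := by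
  rw [rankOneAverage_apply hρc hρ'c, ← integral_inner (integrable_inner_smul hρc hρ'c v v' u')]
  simp only [inner_smul_right, mul_comm]

theorem rankOneAverage_intertwines [MeasurableMul G] [μ.IsMulLeftInvariant]
    (hρc : ∀ v : V, Continuous fun g : G => ρ g v)
    (hρ'c : ∀ v : V', Continuous fun g : G => ρ' g v)
    (hρ'u : ∀ (g : G) (v w : V'), inner K (ρ' g v) (ρ' g w) = (inner K v w : K))
    (v : V) (v' : V') (h : G) (x : V') :
    rankOneAverage μ ρ ρ' v v' (ρ' h x) = ρ h (rankOneAverage μ ρ ρ' v v' x) := by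
  set f : G → V := fun g => inner K (ρ' g v') x • ρ g v
  have hshift : ∀ g, inner K (ρ' g v') (ρ' h x) • ρ g v = ρ h (f (h⁻¹ * g)) := fun g => by
    simp only [f]
    rw [map_smul, ← mul_apply_eq_comp, ← map_mul, mul_inv_cancel_left, map_mul, mul_apply_eq_comp,
      inner_map_inv_apply_left hρ'u]
  rw [rankOneAverage_apply hρc hρ'c, rankOneAverage_apply hρc hρ'c]
  simp_rw [hshift]
  rw [integral_mul_left_eq_self (fun g => ρ h (f g)) h⁻¹,
    (ρ h).integral_comp_comm (integrable_inner_smul hρc hρ'c v v' x)]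

end Averaging

end

theorem schur_orthogonality_general
    {K : Type*} [RCLike K]
    {G : Type*} [Group G] [TopologicalSpace G] [IsTopologicalGroup G] [CompactSpace G]
    [MeasurableSpace G] [BorelSpace G]
    (μ : Measure G) [IsProbabilityMeasure μ] [μ.IsMulLeftInvariant]
    {V : Type*} [NormedAddCommGroup V] [InnerProductSpace K V] [CompleteSpace V]
    {V' : Type*} [NormedAddCommGroup V'] [InnerProductSpace K V'] [CompleteSpace V']
    [Nontrivial V']
    (ρ : G →* (V →L[K] V)) (ρ' : G →* (V' →L[K] V'))
    (hρc : ∀ v : V, Continuous fun g : G => ρ g v)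
    (hρ'c : ∀ v : V', Continuous fun g : G => ρ' g v)
    (hρu : ∀ (g : G) (v w : V), inner K (ρ g v) (ρ g w) = (inner K v w : K))
    (hρ'u : ∀ (g : G) (v w : V'), inner K (ρ' g v) (ρ' g w) = (inner K v w : K))
    (hVirr : ∀ W : Submodule K V, IsClosed (W : Set V) →
      (∀ (g : G) (v : V), v ∈ W → ρ g v ∈ W) → W = ⊥ ∨ W = ⊤)
    (hV'irr : ∀ W : Submodule K V', IsClosed (W : Set V') →
      (∀ (g : G) (v : V'), v ∈ W → ρ' g v ∈ W) → W = ⊥ ∨ W = ⊤)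
    (hfd : FiniteDimensional K V ∨ FiniteDimensional K V')
    (hniso : ¬ ∃ e : V ≃ₗᵢ[K] V', ∀ (g : G) (v : V), e (ρ g v) = ρ' g (e v))
    (u v : V) (u' v' : V') :
    ∫ g, (starRingEnd K) ((starRingEnd K) (inner K u (ρ g v)))
        * (starRingEnd K) (inner K u' (ρ' g v')) ∂μ = 0 := by
  let : NormedSpace ℝ V := NormedSpace.restrictScalars ℝ K V
  have hT0 : rankOneAverage μ ρ ρ' v v' = 0 := eq_zero_of_intertwines_of_not_isomorphic
    hρu hρ'u hVirr hV'irr hfd hniso (rankOneAverage_intertwines hρc hρ'c hρ'u v v')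
  simp_rw [RCLike.conj_conj, inner_conj_symm, ← inner_rankOneAverage hρc hρ'c, hT0,
    zero_apply, inner_zero_right]

/-- **Schur orthogonality.**
Matrix coefficients of non-isomorphic irreducible unitary representations of a compact group
(at least one of which is finite-dimensional) are orthogonal in `L²(G)`:
`∫ conj(ρ^{u,v}(g)) · ρ'^{u',v'}(g) dg = 0`, where `ρ^{u,v}(g) = conj ⟪u, ρ(g)v⟫`. -/
theorem schur_orthogonality
    {K : Type*} [RCLike K]
    {G : Type*} [Group G] [TopologicalSpace G] [IsTopologicalGroup G] [CompactSpace G]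
    [MeasurableSpace G] [BorelSpace G]
    (μ : Measure G) [IsProbabilityMeasure μ] [μ.IsMulLeftInvariant] [μ.IsMulRightInvariant]
    {V : Type*} [NormedAddCommGroup V] [InnerProductSpace K V] [CompleteSpace V] [Nontrivial V]
    {V' : Type*} [NormedAddCommGroup V'] [InnerProductSpace K V'] [CompleteSpace V']
    [Nontrivial V']
    (ρ : G →* (V →L[K] V)) (ρ' : G →* (V' →L[K] V'))
    (hρc : ∀ v : V, Continuous fun g : G => ρ g v)
    (hρ'c : ∀ v : V', Continuous fun g : G => ρ' g v)
    (hρu : ∀ (g : G) (v w : V), inner K (ρ g v) (ρ g w) = (inner K v w : K))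
    (hρ'u : ∀ (g : G) (v w : V'), inner K (ρ' g v) (ρ' g w) = (inner K v w : K))
    (hVirr : ∀ W : Submodule K V, IsClosed (W : Set V) →
      (∀ (g : G) (v : V), v ∈ W → ρ g v ∈ W) → W = ⊥ ∨ W = ⊤)
    (hV'irr : ∀ W : Submodule K V', IsClosed (W : Set V') →
      (∀ (g : G) (v : V'), v ∈ W → ρ' g v ∈ W) → W = ⊥ ∨ W = ⊤)
    (hfd : FiniteDimensional K V ∨ FiniteDimensional K V')
    (hniso : ¬ ∃ e : V ≃ₗᵢ[K] V', ∀ (g : G) (v : V), e (ρ g v) = ρ' g (e v))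
    (u v : V) (u' v' : V') :
    ∫ g, (starRingEnd K) ((starRingEnd K) (inner K u (ρ g v)))
        * (starRingEnd K) (inner K u' (ρ' g v')) ∂μ = 0 :=
  schur_orthogonality_general μ ρ ρ' hρc hρ'c hρu hρ'u hVirr hV'irr hfd hniso u v u' v'
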